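/- arXiv:dg-ga/9708011 — 4 statements merged into one kernel-verified Lean document; each statement's English description precedes it below -/
import Mathlib

section
/- Let X be a nonsingular Beltrami field on a Riemannian 3-manifold (M,g,μ) with ∇×X = fX for a smooth positive function f, where ι_{∇×X}μ = d(ι_X g). Then the 1-form α = ι_X g is a contact form: α ∧ dα = f · ‖X‖² · (nonzero multiple of μ) is nowhere vanishing. -/
open Real

/-- Partial derivative in the `i`-th coordinate direction on `ℝ³`. -/
noncomputable def pd (i : Fin 3) (f : (Fin 3 → ℝ) → ℝ) (p : Fin 3 → ℝ) : ℝ :=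
  fderiv ℝ f p (Pi.single i 1)

/-- The curl of a (co)vector field `α` on `ℝ³`: the vector proxy of the exterior
derivative `dα` of the 1-form with components `α`. -/
noncomputable def curlV (α : (Fin 3 → ℝ) → Fin 3 → ℝ) (p : Fin 3 → ℝ) : Fin 3 → ℝ :=
  ![pd 1 (fun q => α q 2) p - pd 2 (fun q => α q 1) p,
    pd 2 (fun q => α q 0) p - pd 0 (fun q => α q 2) p,
    pd 0 (fun q => α q 1) p - pd 1 (fun q => α q 0) p]

/-- Euclidean dot product on `ℝ³`. -/
def dot3 (u v : Fin 3 → ℝ) : ℝ := ∑ i, u i * v i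

/-- Cross product on `ℝ³`. -/
def cross3 (u v : Fin 3 → ℝ) : Fin 3 → ℝ :=
  ![u 1 * v 2 - u 2 * v 1, u 2 * v 0 - u 0 * v 2, u 0 * v 1 - u 1 * v 0]

open Matrix

theorem dot3_eq_dotProduct (u v : Fin 3 → ℝ) : dot3 u v = u ⬝ᵥ v := rfl

section QuadraticForm

variable {n R : Type*} [Fintype n]

theorem sum_sum_mul_mul_eq_dotProduct_mulVec [CommSemiring R] (A : Matrix n n R) (v : n → R) :
    ∑ i, ∑ j, A i j * v i * v j = v ⬝ᵥ A *ᵥ v := by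
  simp only [dotProduct, mulVec, Finset.mul_sum]
  exact Finset.sum_congr rfl fun i _ => Finset.sum_congr rfl fun j _ => by ring

theorem mulVec_dotProduct_smul [CommSemiring R] (A : Matrix n n R) (v : n → R) (c : R) :
    A *ᵥ v ⬝ᵥ c • v = c * (v ⬝ᵥ A *ᵥ v) := by
  rw [dotProduct_smul, dotProduct_comm, smul_eq_mul]

theorem Matrix.PosDef.sum_sum_mul_mul_pos {A : Matrix n n ℝ} (hA : A.PosDef) {v : n → ℝ}
    (hv : v ≠ 0) : 0 < ∑ i, ∑ j, A i j * v i * v j := by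
  simpa [sum_sum_mul_mul_eq_dotProduct_mulVec] using hA.dotProduct_mulVec_pos hv

end QuadraticForm

/-- In coordinates, `μ = m dx∧dy∧dz` and `curlV α` is the vector proxy of `dα`, so
`α ∧ dα = dot3 α (curlV α) dx∧dy∧dz`. -/
theorem beltrami_gives_contact_form
    (g : (Fin 3 → ℝ) → Matrix (Fin 3) (Fin 3) ℝ) (hg : ∀ p, (g p).PosDef)
    (m : (Fin 3 → ℝ) → ℝ) (hm : ∀ p, m p ≠ 0)
    (X : (Fin 3 → ℝ) → Fin 3 → ℝ) (hX : ∀ p, X p ≠ 0)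
    (f : (Fin 3 → ℝ) → ℝ) (hf : ∀ p, 0 < f p)
    (α : (Fin 3 → ℝ) → Fin 3 → ℝ)
    (hα : ∀ p i, α p i = ∑ j, g p i j * X p j)
    (beltrami : ∀ p i, curlV α p i = m p * (f p * X p i)) :
    ∀ p, dot3 (α p) (curlV α p) = f p * m p * (∑ i, ∑ j, g p i j * X p i * X p j) ∧
      dot3 (α p) (curlV α p) ≠ 0 := by
  intro p
  have hα_eq : α p = g p *ᵥ X p := funext (hα p)
  have hcurl : curlV α p = (f p * m p) • X p :=
    funext fun i => by rw [beltrami p i, Pi.smul_apply, smul_eq_mul]; ring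
  have hcontact : dot3 (α p) (curlV α p) = f p * m p * (∑ i, ∑ j, g p i j * X p i * X p j) := by
    rw [dot3_eq_dotProduct, hα_eq, hcurl, mulVec_dotProduct_smul,
      sum_sum_mul_mul_eq_dotProduct_mulVec]
  refine ⟨hcontact, hcontact ▸ ?_⟩
  exact mul_ne_zero (mul_ne_zero (hf p).ne' (hm p)) ((hg p).sum_sum_mul_mul_pos (hX p)).ne'
end

section
/- Irrational linear flow on T³ is not a Reeb-like field for any contact form: if X = a ∂/∂x + b ∂/∂y + c ∂/∂z is a constant vector field on T³ = ℝ³/ℤ³, there is no 1-form α on T³ with ι_X dα = 0, ι_X α > 0, and α ∧ dα nowhere zero. -/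
open Real MeasureTheory Set

lemma pd_continuous {f : (Fin 3 → ℝ) → ℝ} (hf : ContDiff ℝ (⊤ : ℕ∞) f) (i : Fin 3) :
    Continuous (pd i f) :=
  (hf.continuous_fderiv (by simp)).clm_apply continuous_const

lemma hasDerivAt_line {f : (Fin 3 → ℝ) → ℝ} (hf : ContDiff ℝ (⊤ : ℕ∞) f)
    (q e : Fin 3 → ℝ) (t : ℝ) :
    HasDerivAt (fun t : ℝ => f (q + t • e)) (fderiv ℝ f (q + t • e) e) t := by
  have h1 := (hf.differentiable (by simp) (q + t • e)).hasFDerivAt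
  have h2 : HasDerivAt (fun t : ℝ => q + t • e) e t := by
    simpa using ((hasDerivAt_id t).smul_const e).const_add q
  exact h1.comp_hasDerivAt t h2

lemma line_integral_zero {f : (Fin 3 → ℝ) → ℝ} (hf : ContDiff ℝ (⊤ : ℕ∞) f)
    (hp : ∀ (p : Fin 3 → ℝ) (i : Fin 3), f (p + Pi.single i 1) = f p)
    (j : Fin 3) (q : Fin 3 → ℝ) :
    ∫ t in Icc (0:ℝ) 1, pd j f (q + t • (Pi.single j 1 : Fin 3 → ℝ)) = 0 := by
  have hcont : Continuous fun t : ℝ => pd j f (q + t • (Pi.single j 1 : Fin 3 → ℝ)) :=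
    (pd_continuous hf j).comp (by continuity)
  have hftc : (∫ t in (0:ℝ)..1, pd j f (q + t • (Pi.single j 1 : Fin 3 → ℝ)))
      = f (q + (1:ℝ) • (Pi.single j 1 : Fin 3 → ℝ)) - f (q + (0:ℝ) • (Pi.single j 1 : Fin 3 → ℝ)) := by
    exact intervalIntegral.integral_eq_sub_of_hasDerivAt
      (f' := fun t => pd j f (q + t • (Pi.single j 1 : Fin 3 → ℝ)))
      (fun t _ => hasDerivAt_line hf q ((Pi.single j 1 : Fin 3 → ℝ)) t) (hcont.intervalIntegrable 0 1)
  rw [MeasureTheory.integral_Icc_eq_integral_Ioc,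
    ← intervalIntegral.integral_of_le zero_le_one, hftc]
  simp [hp q j]

lemma slice_zero {f g : (Fin 3 → ℝ) → ℝ} (hf : ContDiff ℝ (⊤ : ℕ∞) f) (hg : ContDiff ℝ (⊤ : ℕ∞) g)
    (hpf : ∀ (p : Fin 3 → ℝ) (i : Fin 3), f (p + Pi.single i 1) = f p)
    (hpg : ∀ (p : Fin 3 → ℝ) (i : Fin 3), g (p + Pi.single i 1) = g p)
    (j k : Fin 3) :
    ∫ z : ℝ × ℝ, (pd j f (z.2 • (Pi.single j 1 : Fin 3 → ℝ) + z.1 • (Pi.single k 1 : Fin 3 → ℝ))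
        - pd k g (z.2 • (Pi.single j 1 : Fin 3 → ℝ) + z.1 • (Pi.single k 1 : Fin 3 → ℝ)))
      ∂((volume.restrict (Icc (0:ℝ) 1)).prod (volume.restrict (Icc (0:ℝ) 1))) = 0 := by
  set I01 : Set ℝ := Icc (0:ℝ) 1 with hI01
  set M : Measure (ℝ × ℝ) := (volume.restrict I01).prod (volume.restrict I01) with hM
  set P : ℝ × ℝ → (Fin 3 → ℝ) :=
    fun z => z.2 • (Pi.single j 1 : Fin 3 → ℝ) + z.1 • (Pi.single k 1 : Fin 3 → ℝ) with hP
  have hPc : Continuous P := by fun_prop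
  have hMr : M = (volume : Measure (ℝ × ℝ)).restrict (I01 ×ˢ I01) := by
    rw [hM, Measure.prod_restrict, ← Measure.volume_eq_prod]
  have hint : ∀ (h : (Fin 3 → ℝ) → ℝ), Continuous h → Integrable (fun z => h (P z)) M := by
    intro h hc
    rw [hMr]
    exact (hc.comp hPc).continuousOn.integrableOn_compact (isCompact_Icc.prod isCompact_Icc)
  have hA := hint (pd j f) (pd_continuous hf j)
  have hB := hint (pd k g) (pd_continuous hg k)
  rw [MeasureTheory.integral_sub hA hB]
  have hAz : ∫ z, pd j f (P z) ∂M = 0 := by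
    rw [hM, MeasureTheory.integral_prod _ hA]
    have inner : ∀ s : ℝ, ∫ t in I01, pd j f (P (s, t)) = 0 := by
      intro s
      simpa [hP, add_comm] using line_integral_zero hf hpf j (s • (Pi.single k 1 : Fin 3 → ℝ))
    simp [inner]
  have hBz : ∫ z, pd k g (P z) ∂M = 0 := by
    rw [hM, MeasureTheory.integral_prod _ hB,
      MeasureTheory.integral_integral_swap (by exact hB)]
    have inner : ∀ t : ℝ, ∫ s in I01, pd k g (P (s, t)) = 0 := by
      intro t
      simpa [hP] using line_integral_zero hg hpg k (t • (Pi.single j 1 : Fin 3 → ℝ))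
    simp [inner]
  rw [hAz, hBz, sub_zero]

lemma int_pos {h : ℝ × ℝ → ℝ} (hc : Continuous h) (hpos : ∀ z, 0 < h z) :
    0 < ∫ z, h z ∂((volume.restrict (Icc (0:ℝ) 1)).prod (volume.restrict (Icc (0:ℝ) 1))) := by
  have hMr : (volume.restrict (Icc (0:ℝ) 1)).prod (volume.restrict (Icc (0:ℝ) 1))
      = (volume : Measure (ℝ × ℝ)).restrict (Icc (0:ℝ) 1 ×ˢ Icc (0:ℝ) 1) := by
    rw [Measure.prod_restrict, ← Measure.volume_eq_prod]
  rw [hMr]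
  have hfi : IntegrableOn h (Icc (0:ℝ) 1 ×ˢ Icc (0:ℝ) 1) volume :=
    hc.continuousOn.integrableOn_compact (isCompact_Icc.prod isCompact_Icc)
  rw [setIntegral_pos_iff_support_of_nonneg_ae
    (Filter.Eventually.of_forall fun z => (hpos z).le) hfi]
  have hsupp : Function.support h ∩ (Icc (0:ℝ) 1 ×ˢ Icc (0:ℝ) 1)
      = Icc (0:ℝ) 1 ×ˢ Icc (0:ℝ) 1 := by
    apply inter_eq_right.2
    intro z _
    exact (hpos z).ne'
  rw [hsupp, Measure.volume_eq_prod, Measure.prod_prod, Real.volume_Icc]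
  norm_num


lemma core (α : (Fin 3 → ℝ) → Fin 3 → ℝ) (hαs : ContDiff ℝ (⊤ : ℕ∞) α)
    (hper : ∀ (p : Fin 3 → ℝ) (i : Fin 3), α (p + Pi.single i 1) = α p)
    (X : Fin 3 → ℝ) (i j k : Fin 3)
    (hCi : ∀ p, curlV α p i
      = pd j (fun q => α q k) p - pd k (fun q => α q j) p)
    (hXi : X i ≠ 0)
    (hrel : ∀ p m, curlV α p m * X i = curlV α p i * X m)
    (hpos : ∀ p, 0 < dot3 (α p) X)
    (hne : ∀ p, dot3 (α p) (curlV α p) ≠ 0) : False := by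
  set ν : (Fin 3 → ℝ) → ℝ :=
    fun p => pd j (fun q => α q k) p - pd k (fun q => α q j) p with hν
  have hcomp : ∀ m : Fin 3, ContDiff ℝ (⊤ : ℕ∞) fun q => α q m := fun m => contDiff_pi.1 hαs m
  have hνc : Continuous ν :=
    (pd_continuous (hcomp k) j).sub (pd_continuous (hcomp j) k)
  have hν0 : ∀ p, ν p ≠ 0 := by
    intro p h0
    have key : dot3 (α p) (curlV α p) * X i = curlV α p i * dot3 (α p) X := by
      simp only [dot3, Fin.sum_univ_three]
      linear_combination (α p 0) * hrel p 0 + (α p 1) * hrel p 1 + (α p 2) * hrel p 2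
    rw [hCi p, show pd j (fun q => α q k) p - pd k (fun q => α q j) p = 0 from h0,
      zero_mul] at key
    exact mul_ne_zero (hne p) hXi key
  have hsign : (∀ p, 0 < ν p) ∨ (∀ p, ν p < 0) := by
    rcases lt_or_gt_of_ne (hν0 0) with hneg | hpos0
    · right
      intro p
      by_contra hle
      push_neg at hle
      have hg : Continuous fun t : ℝ => ν (t • p) := hνc.comp (by fun_prop)
      have := intermediate_value_Icc (zero_le_one' ℝ) hg.continuousOn
      have h0mem : (0:ℝ) ∈ Icc (ν ((0:ℝ) • p)) (ν ((1:ℝ) • p)) := by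
        simp only [zero_smul, one_smul]
        exact ⟨hneg.le, hle⟩
      obtain ⟨t, _, ht⟩ := this h0mem
      exact hν0 (t • p) ht
    · left
      intro p
      by_contra hle
      push_neg at hle
      have hg : Continuous fun t : ℝ => ν (t • p) := hνc.comp (by fun_prop)
      have := intermediate_value_Icc' (zero_le_one' ℝ) hg.continuousOn
      have h0mem : (0:ℝ) ∈ Icc (ν ((1:ℝ) • p)) (ν ((0:ℝ) • p)) := by
        simp only [zero_smul, one_smul]
        exact ⟨hle, hpos0.le⟩
      obtain ⟨t, _, ht⟩ := this h0mem
      exact hν0 (t • p) ht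
  have hz : ∫ z : ℝ × ℝ,
      ν (z.2 • (Pi.single j 1 : Fin 3 → ℝ) + z.1 • (Pi.single k 1 : Fin 3 → ℝ))
      ∂((volume.restrict (Icc (0:ℝ) 1)).prod (volume.restrict (Icc (0:ℝ) 1))) = 0 :=
    slice_zero (hcomp k) (hcomp j)
      (fun p i' => congrFun (hper p i') k) (fun p i' => congrFun (hper p i') j) j k
  have hPc : Continuous fun z : ℝ × ℝ =>
      ν (z.2 • (Pi.single j 1 : Fin 3 → ℝ) + z.1 • (Pi.single k 1 : Fin 3 → ℝ)) :=
    hνc.comp (by fun_prop)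
  rcases hsign with hs | hs
  · exact absurd hz (ne_of_gt (int_pos hPc fun z => hs _))
  · have := int_pos (h := fun z =>
      -ν (z.2 • (Pi.single j 1 : Fin 3 → ℝ) + z.1 • (Pi.single k 1 : Fin 3 → ℝ)))
      (by fun_prop) (fun z => by simpa using hs _)
    rw [MeasureTheory.integral_neg, hz, neg_zero] at this
    exact lt_irrefl 0 this

/-- a constant vector field `X = a ∂x + b ∂y + c ∂z` on
`T³ = ℝ³/ℤ³` (a smooth 1-form on `T³` is a `ℤ³`-periodic 1-form on `ℝ³`) is not
Reeb-like for any contact form: there is no 1-form `α` with `ι_X dα = 0`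
(component vector `(curl α) × X`), `ι_X α > 0`, and `α ∧ dα` nowhere zero. -/
theorem linear_flow_not_reeb_like (a b c : ℝ)
    (α : (Fin 3 → ℝ) → Fin 3 → ℝ) (hαs : ContDiff ℝ (⊤ : ℕ∞) α)
    (hper : ∀ (p : Fin 3 → ℝ) (i : Fin 3), α (p + Pi.single i 1) = α p) :
    ¬ (∀ p : Fin 3 → ℝ,
        cross3 (curlV α p) ![a, b, c] = 0 ∧
        0 < dot3 (α p) ![a, b, c] ∧
        dot3 (α p) (curlV α p) ≠ 0) := by
  intro h
  have hpos := fun p => (h p).2.1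
  have hne := fun p => (h p).2.2
  have h0 : ∀ p, curlV α p 1 * c - curlV α p 2 * b = 0 := fun p => by
    simpa [cross3] using congrFun (h p).1 0
  have h1 : ∀ p, curlV α p 2 * a - curlV α p 0 * c = 0 := fun p => by
    simpa [cross3] using congrFun (h p).1 1
  have h2 : ∀ p, curlV α p 0 * b - curlV α p 1 * a = 0 := fun p => by
    simpa [cross3] using congrFun (h p).1 2
  by_cases ha : a = 0
  · by_cases hb : b = 0
    · by_cases hc : c = 0
      · have := hpos 0
        rw [ha, hb, hc] at this
        simp [dot3, Fin.sum_univ_three] at this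
      · refine core α hαs hper ![a, b, c] 2 0 1 (fun p => by simp [curlV]) (by simp [hc]) ?_
          hpos hne
        intro p m
        fin_cases m
        · simpa using (by linear_combination - h1 p : curlV α p 0 * c = curlV α p 2 * a)
        · simpa using (by linear_combination h0 p : curlV α p 1 * c = curlV α p 2 * b)
        · simp
    · refine core α hαs hper ![a, b, c] 1 2 0 (fun p => by simp [curlV]) (by simp [hb]) ?_
        hpos hne
      intro p m
      fin_cases m
      · simpa using (by linear_combination h2 p : curlV α p 0 * b = curlV α p 1 * a)
      · simp
      · simpa using (by linear_combination - h0 p : curlV α p 2 * b = curlV α p 1 * c)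
  · refine core α hαs hper ![a, b, c] 0 1 2 (fun p => by simp [curlV]) (by simp [ha]) ?_
      hpos hne
    intro p m
    fin_cases m
    · simp
    · simpa using (by linear_combination - h2 p : curlV α p 1 * a = curlV α p 0 * b)
    · simpa using (by linear_combination h1 p : curlV α p 2 * a = curlV α p 0 * c)
end

section
/- Let α be a contact form on a 3-manifold M with Reeb field X, h a smooth positive function, and Y = hX. With the metric g defined in a local frame adapted to α by g(e₁,e₁) = h⁻¹, g(e₂,e₂) = g(e₃,e₃) = 1, g(eᵢ,eⱼ) = 0 for i ≠ j (where e₁ = X and e₂,e₃ is a symplectic basis of ker α for dα), and volume form μ = h⁻¹ e¹∧e²∧e³, the field Y satisfies the Beltrami equation ∇×Y = Y, i.e., d(ι_Y g) = ι_Y μ. -/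
open Real

/-- let `X` be the Reeb field of a contact form `α`, `h > 0` smooth,
`Y = h·X`, and let `g` be the adapted Riemannian metric characterized by
`ι_Y g = α`, with volume form `μ = h⁻¹ α ∧ dα` (coefficient
`h⁻¹ · dot3 α (curl α)`).  Then `Y` satisfies the Beltrami equation `∇×Y = Y`
with respect to `(g, μ)`, i.e. `d(ι_Y g) = ι_Y μ`: the curl of the 1-form `ι_Y g`
equals the vector proxy of the 2-form `ι_Y μ`. -/
theorem rescaled_reeb_is_beltrami
    (α X : (Fin 3 → ℝ) → Fin 3 → ℝ) (h : (Fin 3 → ℝ) → ℝ)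
    (g : (Fin 3 → ℝ) → Matrix (Fin 3) (Fin 3) ℝ) (hg : ∀ p, (g p).PosDef)
    (hαs : ContDiff ℝ (⊤ : ℕ∞) α) (hXs : ContDiff ℝ (⊤ : ℕ∞) X) (hhs : ContDiff ℝ (⊤ : ℕ∞) h)
    (hpos : ∀ p, 0 < h p)
    (hcontact : ∀ p, dot3 (α p) (curlV α p) ≠ 0)
    (hreeb1 : ∀ p, dot3 (α p) (X p) = 1)
    (hreeb2 : ∀ p, cross3 (curlV α p) (X p) = 0)
    (hYg : ∀ p i, (∑ j, g p i j * (h p * X p j)) = α p i) :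
    ∀ p i, curlV (fun q j => ∑ k, g q j k * (h q * X q k)) p i
      = (h p)⁻¹ * dot3 (α p) (curlV α p) * (h p * X p i) := by
  intro p i
  have hfun : (fun q j => ∑ k, g q j k * (h q * X q k)) = α := by
    funext q j; exact hYg q j
  rw [hfun]
  have hne : h p ≠ 0 := ne_of_gt (hpos p)
  have key : curlV α p i = dot3 (α p) (curlV α p) * X p i := by
    have h2 := hreeb2 p
    have c0 := congrFun h2 0
    have c1 := congrFun h2 1
    have c2 := congrFun h2 2
    have h1 := hreeb1 p
    simp [cross3, dot3, Fin.sum_univ_three] at c0 c1 c2 h1 ⊢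
    fin_cases i <;> simp
    · linear_combination -curlV α p 0 * h1 + α p 1 * c2 - α p 2 * c1
    · linear_combination -curlV α p 1 * h1 - α p 0 * c2 + α p 2 * c0
    · linear_combination -curlV α p 2 * h1 + α p 0 * c1 - α p 1 * c0
  rw [key]; field_simp
end

section
/- Let Y = hX be a rescaling of a Reeb field X by a positive function h, realized as a Beltrami field for the adapted metric g (with ι_Y g = α) and g-induced volume form. Then Y is divergence-free with respect to the g-induced volume form if and only if h is a first integral of Y, i.e., L_Y h = 0. -/
open Real

-- auxiliary lemmas
lemma pd_smooth {f : (Fin 3 → ℝ) → ℝ} (hf : ContDiff ℝ (⊤ : ℕ∞) f) (i : Fin 3) :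
    ContDiff ℝ (⊤ : ℕ∞) (pd i f) := by
  have h1 : ContDiff ℝ (⊤ : ℕ∞) (fderiv ℝ f) := hf.fderiv_right (by simp)
  exact (ContinuousLinearMap.apply ℝ ℝ (Pi.single i 1)).contDiff.comp h1

lemma pd_comm {f : (Fin 3 → ℝ) → ℝ} (hf : ContDiff ℝ (⊤ : ℕ∞) f) (i j : Fin 3) (p : Fin 3 → ℝ) :
    pd i (pd j f) p = pd j (pd i f) p := by
  have hd : ∀ y, HasFDerivAt f (fderiv ℝ f y) y :=
    fun y => (hf.differentiable (by simp) y).hasFDerivAt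
  have hd2 : DifferentiableAt ℝ (fderiv ℝ f) p :=
    ((hf.fderiv_right (m := (⊤ : ℕ∞)) (by simp)).differentiable (by simp)) p
  have h2 : HasFDerivAt (fderiv ℝ f) (fderiv ℝ (fderiv ℝ f) p) p := hd2.hasFDerivAt
  have hsymm := second_derivative_symmetric hd h2 (Pi.single i 1) (Pi.single j 1)
  have key : ∀ a b : Fin 3, pd a (pd b f) p =
      (fderiv ℝ (fderiv ℝ f) p (Pi.single a 1)) (Pi.single b 1) := by
    intro a b
    have e1 : pd a (pd b f) p
        = fderiv ℝ (fun q => (fderiv ℝ f q) (Pi.single b (1:ℝ))) p (Pi.single a 1) := rfl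
    rw [e1, fderiv_clm_apply hd2 (differentiableAt_const _)]
    simp
  rw [key i j, key j i, hsymm]

lemma fderiv_eq_sum {f : (Fin 3 → ℝ) → ℝ} (p : Fin 3 → ℝ) (v : Fin 3 → ℝ) :
    fderiv ℝ f p v = ∑ i, v i * pd i f p := by
  have hv : v = ∑ i, v i • (Pi.single i 1 : Fin 3 → ℝ) := by
    funext j
    fin_cases j <;> simp [Fin.sum_univ_three, Pi.single_apply]
  conv_lhs => rw [hv]
  rw [map_sum]
  congr 1; funext i
  rw [map_smul]; simp [pd, smul_eq_mul]

lemma pd_sub {f g : (Fin 3 → ℝ) → ℝ} {p : Fin 3 → ℝ} (hf : DifferentiableAt ℝ f p) (hg : DifferentiableAt ℝ g p)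
    (i : Fin 3) : pd i (fun q => f q - g q) p = pd i f p - pd i g p := by
  rw [pd, fderiv_fun_sub hf hg]; rfl


lemma curl_smooth {α : (Fin 3 → ℝ) → Fin 3 → ℝ} (hαs : ContDiff ℝ (⊤ : ℕ∞) α) (i : Fin 3) :
    ContDiff ℝ (⊤ : ℕ∞) (fun q => curlV α q i) := by
  have hc : ∀ j : Fin 3, ContDiff ℝ (⊤ : ℕ∞) (fun q => α q j) := fun j => contDiff_pi.1 hαs j
  fin_cases i <;>
    · simp only [curlV, Matrix.cons_val_zero, Matrix.cons_val_one, Matrix.head_cons,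
        Matrix.cons_val_two, Matrix.tail_cons]
      exact (pd_smooth (hc _) _).sub (pd_smooth (hc _) _)

lemma div_curl_zero {α : (Fin 3 → ℝ) → Fin 3 → ℝ} (hαs : ContDiff ℝ (⊤ : ℕ∞) α) (p : Fin 3 → ℝ) :
    ∑ i, pd i (fun q => curlV α q i) p = 0 := by
  have hc : ∀ j : Fin 3, ContDiff ℝ (⊤ : ℕ∞) (fun q => α q j) := fun j => contDiff_pi.1 hαs j
  have hd : ∀ (a b : Fin 3), DifferentiableAt ℝ (pd a (fun q => α q b)) p :=
    fun a b => ((pd_smooth (hc b) a).differentiable (by simp)) p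
  have e : ∀ i : Fin 3, (fun q => curlV α q i) = fun q => curlV α q i := fun _ => rfl
  rw [Fin.sum_univ_three]
  have e0 : (fun q => curlV α q 0)
      = fun q => pd 1 (fun r => α r 2) q - pd 2 (fun r => α r 1) q := by
    funext q; simp [curlV]
  have e1 : (fun q => curlV α q 1)
      = fun q => pd 2 (fun r => α r 0) q - pd 0 (fun r => α r 2) q := by
    funext q; simp [curlV]
  have e2 : (fun q => curlV α q 2)
      = fun q => pd 0 (fun r => α r 1) q - pd 1 (fun r => α r 0) q := by
    funext q; simp [curlV]
  rw [e0, e1, e2, pd_sub (hd _ _) (hd _ _), pd_sub (hd _ _) (hd _ _), pd_sub (hd _ _) (hd _ _)]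
  rw [pd_comm (hc 2) 0 1, pd_comm (hc 1) 0 2, pd_comm (hc 0) 1 2]
  ring

lemma pd_sqrt_mul {h g : (Fin 3 → ℝ) → ℝ} {p : Fin 3 → ℝ}
    (hh : DifferentiableAt ℝ h p) (hg : DifferentiableAt ℝ g p) (hp : 0 < h p) (i : Fin 3) :
    pd i (fun q => Real.sqrt (h q) * g q) p
      = (2 * Real.sqrt (h p))⁻¹ * pd i h p * g p + Real.sqrt (h p) * pd i g p := by
  have hs : HasFDerivAt (fun q => Real.sqrt (h q))
      ((1 / (2 * Real.sqrt (h p))) • fderiv ℝ h p) p :=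
    (Real.hasDerivAt_sqrt hp.ne').comp_hasFDerivAt p hh.hasFDerivAt
  have hmul := hs.mul hg.hasFDerivAt
  rw [pd, show (fun q => Real.sqrt (h q) * g q) = (fun q => Real.sqrt (h q)) * g from rfl, hmul.fderiv]
  simp [pd, smul_eq_mul]
  ring

lemma curl_eq_smul {α X : (Fin 3 → ℝ) → Fin 3 → ℝ} {p : Fin 3 → ℝ}
    (h1 : dot3 (α p) (X p) = 1) (h2 : cross3 (curlV α p) (X p) = 0) (i : Fin 3) :
    curlV α p i = dot3 (α p) (curlV α p) * X p i := by
  have c0 := congrFun h2 0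
  have c1 := congrFun h2 1
  have c2 := congrFun h2 2
  simp [cross3] at c0 c1 c2
  simp only [dot3, Fin.sum_univ_three] at h1
  have g0 : curlV α p 0 = dot3 (α p) (curlV α p) * X p 0 := by
    simp only [dot3, Fin.sum_univ_three]
    linear_combination -(curlV α p 0) * h1 + (α p 1) * c2 - (α p 2) * c1
  have g1 : curlV α p 1 = dot3 (α p) (curlV α p) * X p 1 := by
    simp only [dot3, Fin.sum_univ_three]
    linear_combination -(curlV α p 1) * h1 - (α p 0) * c2 + (α p 2) * c0
  have g2 : curlV α p 2 = dot3 (α p) (curlV α p) * X p 2 := by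
    simp only [dot3, Fin.sum_univ_three]
    linear_combination -(curlV α p 2) * h1 + (α p 0) * c1 - (α p 1) * c0
  fin_cases i
  · exact g0
  · exact g1
  · exact g2

/-- let `Y = h·X` be a rescaling of the Reeb field `X` of a contact
form `α` by a smooth positive function `h`, realized as a Beltrami field for the
adapted metric `g` (with `ι_Y g = α`, so `det g = h⁻¹` in the adapted frame).  The
`g`-induced volume form is `ν = h^{-1/2} α ∧ dα` (coefficient
`(√h)⁻¹ · dot3 α (curl α)`).  Then `Y` is divergence-free with respect to `ν`
(`d(ι_Y ν) = 0`) if and only if `h` is a first integral of `Y`: `L_Y h = dh(Y) = 0`. -/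
theorem rescaled_reeb_divergence_free_iff
    (α X : (Fin 3 → ℝ) → Fin 3 → ℝ) (h : (Fin 3 → ℝ) → ℝ)
    (hαs : ContDiff ℝ (⊤ : ℕ∞) α) (hXs : ContDiff ℝ (⊤ : ℕ∞) X) (hhs : ContDiff ℝ (⊤ : ℕ∞) h)
    (hpos : ∀ p, 0 < h p)
    (hcontact : ∀ p, dot3 (α p) (curlV α p) ≠ 0)
    (hreeb1 : ∀ p, dot3 (α p) (X p) = 1)
    (hreeb2 : ∀ p, cross3 (curlV α p) (X p) = 0) :
    (∀ p, ∑ i,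
        pd i (fun q => (Real.sqrt (h q))⁻¹ * dot3 (α q) (curlV α q) * (h q * X q i)) p = 0)
      ↔ (∀ p, fderiv ℝ h p (h p • X p) = 0) := by
  have hcurl : ∀ p i, curlV α p i = dot3 (α p) (curlV α p) * X p i :=
    fun p i => curl_eq_smul (hreeb1 p) (hreeb2 p) i
  have hsq : ∀ p, Real.sqrt (h p) ≠ 0 := fun p => (Real.sqrt_pos.2 (hpos p)).ne'
  have hrw : ∀ i : Fin 3,
      (fun q => (Real.sqrt (h q))⁻¹ * dot3 (α q) (curlV α q) * (h q * X q i))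
        = fun q => Real.sqrt (h q) * curlV α q i := by
    intro i; funext q
    have hinv : (Real.sqrt (h q))⁻¹ * h q = Real.sqrt (h q) := by
      rw [inv_mul_eq_div, div_eq_iff (hsq q)]
      exact (Real.mul_self_sqrt (hpos q).le).symm
    calc (Real.sqrt (h q))⁻¹ * dot3 (α q) (curlV α q) * (h q * X q i)
        = ((Real.sqrt (h q))⁻¹ * h q) * (dot3 (α q) (curlV α q) * X q i) := by ring
      _ = Real.sqrt (h q) * curlV α q i := by rw [hinv, hcurl q i]
  have key : ∀ p,
      (∑ i, pd i (fun q => (Real.sqrt (h q))⁻¹ * dot3 (α q) (curlV α q) * (h q * X q i)) p)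
        = (2 * Real.sqrt (h p))⁻¹ * dot3 (α p) (curlV α p) * fderiv ℝ h p (X p) := by
    intro p
    have step1 : ∀ i : Fin 3,
        pd i (fun q => (Real.sqrt (h q))⁻¹ * dot3 (α q) (curlV α q) * (h q * X q i)) p
          = (2 * Real.sqrt (h p))⁻¹ * pd i h p * curlV α p i
            + Real.sqrt (h p) * pd i (fun q => curlV α q i) p := by
      intro i
      rw [hrw i]
      exact pd_sqrt_mul ((hhs.differentiable (by simp)) p)
        (((curl_smooth hαs i).differentiable (by simp)) p) (hpos p) i
    rw [Finset.sum_congr rfl fun i _ => step1 i, Finset.sum_add_distrib,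
      ← Finset.mul_sum, div_curl_zero hαs p, mul_zero, add_zero,
      fderiv_eq_sum p (X p)]
    rw [Fin.sum_univ_three, Fin.sum_univ_three, hcurl p 0, hcurl p 1, hcurl p 2]
    ring
  constructor
  · intro H p
    have hp := H p
    rw [key p] at hp
    have hD : fderiv ℝ h p (X p) = 0 := by
      rcases mul_eq_zero.1 hp with h' | h'
      · rcases mul_eq_zero.1 h' with h'' | h''
        · exact absurd h'' (inv_ne_zero (mul_ne_zero two_ne_zero (hsq p)))
        · exact absurd h'' (hcontact p)
      · exact h'
    rw [map_smul, hD, smul_zero]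
  · intro H p
    have hp := H p
    rw [map_smul, smul_eq_mul, mul_eq_zero] at hp
    have hD : fderiv ℝ h p (X p) = 0 := hp.resolve_left (hpos p).ne'
    rw [key p, hD, mul_zero]
end
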